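/- Suppose gcd(m+1, n+1) = 1 with m < n. In the auxiliary bipartite graph H (defined with parts B and C as above), the vertices u'_0 and v'_0 lie in different connected components. -/
import Mathlib


/-- One direction of the adjacency of the auxiliary graph `H`:
`u'_i` (resp. `v'_j`) is joined to `c_k`, where the vertex `.inr x : Fin (m+n)`
represents the color `x + 1`.  Thus `u'_i — c_i` (for `1 ≤ i`) becomes `k + 1 = i`,
and `u'_i — c_{i+n+1}` becomes `k = i + n`; similarly for `v'_j`. -/
def HRel (m n : ℕ) : ((Fin m ⊕ Fin n) ⊕ Fin (m + n)) → ((Fin m ⊕ Fin n) ⊕ Fin (m + n)) → Prop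
  | .inl (.inl i), .inr k => (k : ℕ) + 1 = i ∨ (k : ℕ) = i + n
  | .inl (.inr j), .inr k => (k : ℕ) + 1 = j ∨ (k : ℕ) = j + m
  | _, _ => False

/-- The auxiliary bipartite graph `H`. -/
def Hgraph (m n : ℕ) : SimpleGraph ((Fin m ⊕ Fin n) ⊕ Fin (m + n)) :=
  SimpleGraph.fromRel (HRel m n)

/-- The inverse of `n+1` modulo `m+1`. -/
def Sinv (m n : ℕ) : ZMod (m + 1) := ((n + 1 : ℕ) : ZMod (m + 1))⁻¹

/-- The separating predicate on residues mod `m+1`. -/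
def Qp (m n : ℕ) (x : ZMod (m + 1)) : Prop :=
  1 ≤ x.val ∧ x.val ≤ (-(Sinv m n)).val

/-- The invariant function on vertices of `H`. -/
def Fv (m n : ℕ) : ((Fin m ⊕ Fin n) ⊕ Fin (m + n)) → Prop
  | .inl (.inl i) => Qp m n ((((i : ℕ) + n + 1 : ℕ) : ZMod (m + 1)) * Sinv m n)
  | .inl (.inr j) => Qp m n ((((j : ℕ) : ℕ) : ZMod (m + 1)) * Sinv m n)
  | .inr k => Qp m n ((((k : ℕ) + 1 : ℕ) : ZMod (m + 1)) * Sinv m n)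

lemma Sinv_mul (m n : ℕ) (hg : Nat.gcd (m + 1) (n + 1) = 1) :
    ((n + 1 : ℕ) : ZMod (m + 1)) * Sinv m n = 1 :=
  ZMod.coe_mul_inv_eq_one _ (Nat.coprime_comm.mp hg)

lemma mulS_eq_zero (m n : ℕ) (hg : Nat.gcd (m + 1) (n + 1) = 1) (a : ℕ) :
    ((a : ℕ) : ZMod (m + 1)) * Sinv m n = 0 ↔ (m + 1) ∣ a := by
  constructor
  · intro h
    have h2 : ((a : ℕ) : ZMod (m + 1)) * Sinv m n * ((n + 1 : ℕ) : ZMod (m + 1)) = 0 := by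
      rw [h, zero_mul]
    rw [mul_assoc, mul_comm (Sinv m n), Sinv_mul m n hg, mul_one] at h2
    exact (ZMod.natCast_eq_zero_iff a (m + 1)).mp h2
  · intro h
    rw [(ZMod.natCast_eq_zero_iff a (m + 1)).mpr h, zero_mul]

lemma Sinv_ne_zero (m n : ℕ) (hm : 0 < m) (hg : Nat.gcd (m + 1) (n + 1) = 1) :
    Sinv m n ≠ 0 := by
  intro h
  have h1 : ((1 : ZMod (m + 1))).val = (0 : ZMod (m + 1)).val := by
    rw [← Sinv_mul m n hg, h, mul_zero]
  haveI : Fact (1 < m + 1) := ⟨by omega⟩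
  rw [ZMod.val_one, ZMod.val_zero] at h1
  exact one_ne_zero h1

/-- Key step lemma: `Qp` is preserved under adding `1`, away from `0` and `-Sinv`. -/
lemma Qp_step (m n : ℕ) (hm : 0 < m) (x : ZMod (m + 1))
    (hx0 : x ≠ 0) (hxt : x ≠ -(Sinv m n)) : Qp m n x ↔ Qp m n (x + 1) := by
  haveI : Fact (1 < m + 1) := ⟨by omega⟩
  have hv0 : x.val ≠ 0 := fun h => hx0 ((ZMod.val_eq_zero x).mp h)
  have hvt : x.val ≠ (-(Sinv m n)).val := fun h => hxt (ZMod.val_injective (m + 1) h)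
  have hvlt : x.val < m + 1 := ZMod.val_lt x
  have htlt : (-(Sinv m n)).val < m + 1 := ZMod.val_lt _
  have hadd : (x + 1).val = (x.val + 1) % (m + 1) := by
    rw [ZMod.val_add, ZMod.val_one]
  rcases Nat.lt_or_ge (x.val + 1) (m + 1) with h | h
  · rw [Nat.mod_eq_of_lt h] at hadd
    unfold Qp
    rw [hadd]
    omega
  · have hxm : x.val = m := by omega
    have : (x.val + 1) % (m + 1) = 0 := by
      rw [hxm]
      simp
    rw [this] at hadd
    unfold Qp
    rw [hadd]
    omega

lemma adjF (m n : ℕ) (hm : 0 < m) (hg : Nat.gcd (m + 1) (n + 1) = 1) :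
    ∀ v w, (Hgraph m n).Adj v w → (Fv m n v ↔ Fv m n w) := by
  have key : ∀ (i : Fin m) (k : Fin (m + n)), HRel m n (.inl (.inl i)) (.inr k) →
      (Fv m n (.inl (.inl i)) ↔ Fv m n (.inr k)) := by
    intro i k h
    rcases h with h | h
    · -- k + 1 = i, so i ≥ 1; colors i and i+n+1
      have hi1 : 1 ≤ (i : ℕ) := by omega
      have him : (i : ℕ) < m := i.isLt
      set x : ZMod (m + 1) := (((i : ℕ) : ℕ) : ZMod (m + 1)) * Sinv m n with hx
      have hx0 : x ≠ 0 := by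
        intro hc
        have := (mulS_eq_zero m n hg (i : ℕ)).mp hc
        have := Nat.le_of_dvd (by omega) this
        omega
      have hxt : x ≠ -(Sinv m n) := by
        intro hc
        have hc2 : (((i : ℕ) + 1 : ℕ) : ZMod (m + 1)) * Sinv m n = 0 := by
          push_cast
          rw [add_mul, one_mul]
          rw [hx] at hc
          rw [hc]
          ring
        have := (mulS_eq_zero m n hg ((i : ℕ) + 1)).mp hc2
        have := Nat.le_of_dvd (by omega) this
        omega
      have hcast : ((((i : ℕ) + n + 1 : ℕ)) : ZMod (m + 1)) * Sinv m n = x + 1 := by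
        have : ((((i : ℕ) + n + 1 : ℕ)) : ZMod (m + 1)) =
            (((i : ℕ) : ℕ) : ZMod (m + 1)) + ((n + 1 : ℕ) : ZMod (m + 1)) := by
          push_cast; ring
        rw [this, add_mul, Sinv_mul m n hg, hx]
      show Qp m n _ ↔ Qp m n _
      rw [hcast, h]
      exact ((Qp_step m n hm x hx0 hxt).symm)
    · -- k = i + n : same color
      show Qp m n _ ↔ Qp m n _
      rw [h]
  have key2 : ∀ (j : Fin n) (k : Fin (m + n)), HRel m n (.inl (.inr j)) (.inr k) →
      (Fv m n (.inl (.inr j)) ↔ Fv m n (.inr k)) := by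
    intro j k h
    rcases h with h | h
    · show Qp m n _ ↔ Qp m n _
      rw [h]
    · -- k = j + m : color j + m + 1 ≡ j mod (m+1)
      show Qp m n _ ↔ Qp m n _
      have : ((((k : ℕ) + 1 : ℕ)) : ZMod (m + 1)) = (((j : ℕ) : ℕ) : ZMod (m + 1)) := by
        rw [h]
        push_cast
        have : ((m : ℕ) : ZMod (m + 1)) + 1 = ((m + 1 : ℕ) : ZMod (m + 1)) := by push_cast; ring
        rw [add_assoc, this, ZMod.natCast_self, add_zero]
      rw [this]
  intro v w h
  rw [Hgraph, SimpleGraph.fromRel_adj] at h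
  obtain ⟨hne, h | h⟩ := h
  · rcases v with (i | j) | k
    · rcases w with (i' | j') | k'
      · exact h.elim
      · exact h.elim
      · exact key _ _ h
    · rcases w with (i' | j') | k'
      · exact h.elim
      · exact h.elim
      · exact key2 _ _ h
    · exact h.elim
  · rcases w with (i' | j') | k'
    · rcases v with (i | j) | k
      · exact h.elim
      · exact h.elim
      · exact (key _ _ h).symm
    · rcases v with (i | j) | k
      · exact h.elim
      · exact h.elim
      · exact (key2 _ _ h).symm
    · exact h.elim

theorem stmt_16 (m n : ℕ) (hm : 0 < m) (hmn : m < n)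
    (hg : Nat.gcd (m + 1) (n + 1) = 1) :
    (Hgraph m n).connectedComponentMk (.inl (.inl ⟨0, hm⟩)) ≠
      (Hgraph m n).connectedComponentMk (.inl (.inr ⟨0, hm.trans hmn⟩)) := by
  haveI : Fact (1 < m + 1) := ⟨by omega⟩
  intro heq
  rw [SimpleGraph.ConnectedComponent.eq] at heq
  obtain ⟨p⟩ := heq
  have hwalk : ∀ (a b : (Fin m ⊕ Fin n) ⊕ Fin (m + n)) (q : (Hgraph m n).Walk a b),
      Fv m n a ↔ Fv m n b := by
    intro a b q
    induction q with
    | nil => exact Iff.rfl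
    | cons h q ih => exact (adjF m n hm hg _ _ h).trans ih
  have hF := hwalk _ _ p
  -- Fv at u'_0 : Qp ((n+1) * Sinv) = Qp 1, which holds
  have hu : Fv m n (.inl (.inl ⟨0, hm⟩)) := by
    show Qp m n _
    have h1 : ((((0 : ℕ) + n + 1 : ℕ)) : ZMod (m + 1)) * Sinv m n = 1 := by
      rw [Nat.zero_add]
      exact Sinv_mul m n hg
    rw [h1]
    constructor
    · rw [ZMod.val_one]
    · rw [ZMod.val_one]
      have hne : -(Sinv m n) ≠ 0 := by
        simpa using Sinv_ne_zero m n hm hg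
      have : (-(Sinv m n)).val ≠ 0 := fun h => hne ((ZMod.val_eq_zero _).mp h)
      omega
  have hv : ¬ Fv m n (.inl (.inr ⟨0, hm.trans hmn⟩)) := by
    show ¬ Qp m n _
    intro hq
    obtain ⟨h1, _⟩ := hq
    simp only [Nat.cast_zero, zero_mul] at h1
    rw [ZMod.val_zero] at h1
    omega
  exact hv (hF.mp hu)
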